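/- The subdifferential of g* satisfies: if h is not identically zero, then for v ∈ dom g*, ∂g*(v) = {0} if |v| < τ, ∂g*(v) = sign(v)·[0, μ] ∩ ℝ if |v| = τ, and ∂g*(v) = ∂h*(v) if |v| > τ. -/

import Mathlib

noncomputable section

open Set
open scoped Classical

/-- Convex (Fenchel) conjugate of an extended-real-valued function on `ℝ`. -/
def conj (f : ℝ → EReal) (v : ℝ) : EReal := ⨆ x : ℝ, ((v * x : ℝ) : EReal) - f x

/-- Convex subdifferential of an extended-real-valued function on `ℝ`. -/
def subdiff (f : ℝ → EReal) (x : ℝ) : Set ℝ :=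
  {d : ℝ | ∀ y : ℝ, f x + ((d * (y - x) : ℝ) : EReal) ≤ f y}

/-- Convexity of an extended-real-valued function on `ℝ`. -/
def EConvexOn (f : ℝ → EReal) : Prop :=
  ∀ x y a b : ℝ, 0 ≤ a → 0 ≤ b → a + b = 1 →
    f (a * x + b * y) ≤ (a : EReal) * f x + (b : EReal) * f y

/-- The ℓ₀-penalized regularizer `g(x) = λ‖x‖₀ + h(x)`. -/
def gfun (lam : ℝ) (h : ℝ → EReal) (x : ℝ) : EReal :=
  (if x = 0 then (0 : EReal) else (lam : EReal)) + h x

/-- The parameter `τ = sup {v ≥ 0 : h*(v) ≤ λ}` (as a real number). -/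
def tau (lam : ℝ) (h : ℝ → EReal) : ℝ :=
  sSup {v : ℝ | 0 ≤ v ∧ conj h v ≤ (lam : EReal)}

/-- The parameter `μ = sup {x ≥ 0 : x ∈ ∂h*(τ)}` if `∂h*(τ) ≠ ∅`, else `+∞`. -/
def mu (lam : ℝ) (h : ℝ → EReal) : EReal :=
  if (subdiff (conj h) (tau lam h)).Nonempty then
    sSup ((fun x : ℝ => (x : EReal)) '' {x : ℝ | 0 ≤ x ∧ x ∈ subdiff (conj h) (tau lam h)})
  else ⊤

/-- The parameter `β = sup {v ≥ 0 : v ∈ dom h*}`. -/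
def beta (h : ℝ → EReal) : EReal :=
  sSup ((fun v : ℝ => (v : EReal)) '' {v : ℝ | 0 ≤ v ∧ conj h v ≠ ⊤})

/-- The parameter `κ = sup {v ≥ 0 : v ∈ ∂h(μ)}` if `μ < +∞`, else `+∞`. -/
def kappa (lam : ℝ) (h : ℝ → EReal) : EReal :=
  if mu lam h ≠ ⊤ then
    sSup ((fun v : ℝ => (v : EReal)) '' {v : ℝ | 0 ≤ v ∧ v ∈ subdiff h (mu lam h).toReal})
  else ⊤

/-- The set of minimizers of `u ↦ ½(u − v)² + γ·ω(u)`, i.e. `prox_{γω}(v)`. -/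
def proxSet (γ : ℝ) (ω : ℝ → EReal) (v : ℝ) : Set ℝ :=
  {u : ℝ | ∀ w : ℝ,
    ((2⁻¹ * (u - v) ^ 2 : ℝ) : EReal) + (γ : EReal) * ω u ≤
      ((2⁻¹ * (w - v) ^ 2 : ℝ) : EReal) + (γ : EReal) * ω w}

/-!
Write `H = h*`. Splitting off `x = 0` in the supremum gives `g* = max (H - λ, 0)`, and `H` is even,
convex, lower semicontinuous and nondecreasing on `[0, ∞)`; so the set defining `τ` is closed and `τ`
is the largest `v ≥ 0` with `H v ≤ λ`. Convexity of `h` and `h ≠ 0` make `h` grow at least linearly,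
which gives a `w > 0` with `H w ≤ λ`, so `τ > 0`.

For `|v| < τ`, `g* ≥ 0` vanishes on `[-τ, τ]`, so `0` is its only subgradient. For `|v| > τ`,
`g* = H - λ` near `v`, and a local subgradient of a convex function is a global one. At `τ`, `d` is a
subgradient of `g*` iff `d ≥ 0` and `λ + d (y - τ) ≤ H y` for all `y > τ`. If `H y < ∞` for some
`y > τ`, then `τ` is interior to `dom H`, where `H` is continuous (so `H τ = λ`) and has its right
derivative as a subgradient; this turns the condition into `d ≤ μ`. Evenness handles `v = -τ`.
-/

open Filter Topology

lemma apply_abs_of_neg_eq {α : Type*} {f : ℝ → α} (hf_even : ∀ x, f (-x) = f x) (x : ℝ) :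
    f |x| = f x := by
  rcases abs_choice x with hx | hx <;> simp [hx, hf_even]

lemma Convex.epigraph_comb_le {F : ℝ → EReal} (hF : Convex ℝ {p : ℝ × ℝ | F p.1 ≤ p.2})
    {x y p q a b : ℝ} (hx : F x ≤ p) (hy : F y ≤ q) (ha : 0 ≤ a) (hb : 0 ≤ b) (hab : a + b = 1) :
    F (a * x + b * y) ≤ ((a * p + b * q : ℝ) : EReal) := by
  simpa using hF (x := (x, p)) hx (y := (y, q)) hy ha hb hab

section Conjugate

variable {f : ℝ → EReal}

lemma le_conj (f : ℝ → EReal) (v x : ℝ) : ((v * x : ℝ) : EReal) - f x ≤ conj f v :=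
  le_iSup (fun x : ℝ => ((v * x : ℝ) : EReal) - f x) x

lemma conj_le_coe_iff {v p : ℝ} :
    conj f v ≤ p ↔ ∀ x c : ℝ, f x ≤ c → v * x ≤ p + c := by
  refine ⟨fun hv x c hc => ?_, fun H => iSup_le fun x => ?_⟩
  · have := (EReal.sub_le_sub le_rfl hc).trans ((le_conj f v x).trans hv)
    rw [← EReal.coe_sub, EReal.coe_le_coe_iff] at this
    linarith
  · cases hx : f x using EReal.rec with
    | bot => exact absurd (H x (v * x - p - 1) (by rw [hx]; exact bot_le)) (by linarith)
    | coe c => rw [← EReal.coe_sub, EReal.coe_le_coe_iff]; linarith [H x c hx.le]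
    | top => simp

lemma conj_nonneg (hf0 : f 0 = 0) (v : ℝ) : 0 ≤ conj f v := by
  simpa [hf0] using le_conj f v 0

lemma conj_ne_bot (hf0 : f 0 = 0) (v : ℝ) : conj f v ≠ ⊥ :=
  ne_bot_of_le_ne_bot (by simp) (conj_nonneg hf0 v)

lemma conj_zero (hf0 : f 0 = 0) (hf_nonneg : ∀ x, 0 ≤ f x) : conj f 0 = 0 :=
  le_antisymm (iSup_le fun x => by simpa using hf_nonneg x) (conj_nonneg hf0 0)

lemma conj_neg_eq (hf_even : ∀ x, f (-x) = f x) (v : ℝ) : conj f (-v) = conj f v := by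
  have key : ∀ w, conj f (-w) ≤ conj f w := fun w =>
    iSup_le fun x => by simpa [hf_even] using le_conj f w (-x)
  exact le_antisymm (key v) (by simpa using key (-v))

lemma monotoneOn_conj (hf_even : ∀ x, f (-x) = f x) : MonotoneOn (conj f) (Ici 0) := by
  intro u (hu : 0 ≤ u) w _ huw
  refine iSup_le fun x => ?_
  have hux : u * x ≤ w * |x| := by nlinarith [le_abs_self x, abs_nonneg x]
  calc ((u * x : ℝ) : EReal) - f x ≤ ((w * |x| : ℝ) : EReal) - f |x| := by
        rw [apply_abs_of_neg_eq hf_even]; exact EReal.sub_le_sub (EReal.coe_le_coe_iff.2 hux) le_rfl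
    _ ≤ conj f w := le_conj f w |x|

lemma lowerSemicontinuous_conj (f : ℝ → EReal) : LowerSemicontinuous (conj f) := by
  refine lowerSemicontinuous_iSup fun x => Continuous.lowerSemicontinuous ?_
  cases f x using EReal.rec with
  | bot => simp only [EReal.coe_sub_bot]; exact continuous_const
  | coe c =>
    simp only [← EReal.coe_sub]
    exact continuous_coe_real_ereal.comp (by fun_prop)
  | top => simp only [EReal.sub_top]; exact continuous_const

lemma convex_epigraph_conj (f : ℝ → EReal) : Convex ℝ {p : ℝ × ℝ | conj f p.1 ≤ p.2} := by
  rintro ⟨v, p⟩ hp ⟨w, q⟩ hq a b ha hb hab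
  obtain rfl : b = 1 - a := by linarith
  simp only [mem_ofPred_eq, conj_le_coe_iff] at hp hq ⊢
  intro x c hc
  simp only [Prod.smul_mk, Prod.mk_add_mk, smul_eq_mul]
  nlinarith [mul_le_mul_of_nonneg_left (hp x c hc) ha, mul_le_mul_of_nonneg_left (hq x c hc) hb]

end Conjugate

section Subdifferential

variable {F : ℝ → EReal}

lemma neg_mem_subdiff (hF_even : ∀ y, F (-y) = F y) {x d : ℝ} (hd : d ∈ subdiff F x) :
    -d ∈ subdiff F (-x) := by
  intro y
  rw [hF_even, ← hF_even y]
  convert hd (-y) using 3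
  ring

lemma subdiff_neg (hF_even : ∀ y, F (-y) = F y) (x : ℝ) : subdiff F (-x) = -subdiff F x := by
  ext d
  exact ⟨fun hd => by simpa using neg_mem_subdiff hF_even hd,
    fun hd => by simpa using neg_mem_subdiff hF_even hd⟩

lemma subdiff_eq_singleton_zero (hF_nonneg : ∀ y, 0 ≤ F y) {a x b : ℝ} (hax : a < x) (hxb : x < b)
    (ha : F a = 0) (hx : F x = 0) (hb : F b = 0) : subdiff F x = {0} := by
  ext d
  refine ⟨fun hd => ?_, fun hd y => ?_⟩
  · have hda := hd a
    have hdb := hd b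
    rw [hx, ha, zero_add, EReal.coe_nonpos] at hda
    rw [hx, hb, zero_add, EReal.coe_nonpos] at hdb
    exact mem_singleton_iff.2 (by nlinarith)
  · rw [mem_singleton_iff.1 hd, hx]
    simpa using hF_nonneg y

lemma max_mem_subdiff {x d e : ℝ} (he : e ∈ subdiff F x)
    (hd : ∀ y, x < y → F x + ((d * (y - x) : ℝ) : EReal) ≤ F y) : max d e ∈ subdiff F x := by
  intro y
  rcases le_or_gt y x with hyx | hxy
  · refine le_trans (add_le_add le_rfl ?_) (he y)
    exact EReal.coe_le_coe_iff.2 (mul_le_mul_of_nonpos_right (le_max_right d e) (sub_nonpos.2 hyx))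
  · rcases le_total d e with hde | hed
    · rw [max_eq_right hde]; exact he y
    · rw [max_eq_left hed]; exact hd y hxy

lemma mem_subdiff_of_eventually (hF : Convex ℝ {p : ℝ × ℝ | F p.1 ≤ p.2}) {x d : ℝ}
    (hx : F x ≠ ⊤) (hd : ∀ᶠ y in 𝓝 x, F x + ((d * (y - x) : ℝ) : EReal) ≤ F y) :
    d ∈ subdiff F x := by
  intro y
  cases hFx : F x using EReal.rec with
  | bot => simp
  | top => exact absurd hFx hx
  | coe p =>
    rw [← EReal.le_of_forall_lt_iff_le]
    intro q hq
    have hseg : Tendsto (fun t : ℝ => (1 - t) * x + t * y) (𝓝[>] 0) (𝓝 x) := by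
      have : Continuous (fun t : ℝ => (1 - t) * x + t * y) := by fun_prop
      simpa using (this.tendsto 0).mono_left nhdsWithin_le_nhds
    obtain ⟨t, hloc, ht0, ht1⟩ := ((hseg.eventually hd).and (Ioc_mem_nhdsGT one_pos)).exists
    have := hloc.trans (hF.epigraph_comb_le hFx.le hq.le (sub_nonneg.2 ht1) ht0.le (by ring))
    rw [hFx, ← EReal.coe_add, EReal.coe_le_coe_iff] at this
    rw [← EReal.coe_add, EReal.coe_le_coe_iff]
    have hscaled : t * (p + d * (y - x)) ≤ t * q := by linarith
    exact le_of_mul_le_mul_left hscaled ht0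

lemma subdiff_max_sub_const (hF : Convex ℝ {p : ℝ × ℝ | F p.1 ≤ p.2})
    (hlsc : LowerSemicontinuous F) {x c : ℝ} (hx : F x ≠ ⊤) (hc : (c : EReal) < F x) :
    subdiff (fun y => (F y - c) ⊔ 0) x = subdiff F x := by
  have hmax : ∀ {y}, (c : EReal) < F y → (F y - c) ⊔ 0 = F y - c :=
    fun hy => sup_eq_left.2 (EReal.sub_pos.2 hy).le
  ext d
  refine ⟨fun hd => mem_subdiff_of_eventually hF hx ?_, fun hd y => ?_⟩
  · filter_upwards [hlsc x c hc] with y hy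
    have := add_le_add (hd y) (le_refl (c : EReal))
    simp only [hmax hc, hmax hy] at this
    rwa [EReal.sub_add_cancel, add_right_comm, EReal.sub_add_cancel] at this
  · simp only [hmax hc]
    calc F x - c + ((d * (y - x) : ℝ) : EReal) = F x + ((d * (y - x) : ℝ) : EReal) - c := by
          rw [sub_eq_add_neg (F x), sub_eq_add_neg (F x + _), add_right_comm]
      _ ≤ F y - c := EReal.sub_le_sub (hd y) le_rfl
      _ ≤ (F y - c) ⊔ 0 := le_sup_left

lemma convexOn_toReal_of_convex_epigraph (hF : Convex ℝ {p : ℝ × ℝ | F p.1 ≤ p.2})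
    (hbot : ∀ x, F x ≠ ⊥) : ConvexOn ℝ {x | F x ≠ ⊤} (fun x => (F x).toReal) := by
  have key : ∀ x ∈ {x | F x ≠ ⊤}, ∀ y ∈ {x | F x ≠ ⊤}, ∀ a b : ℝ, 0 ≤ a → 0 ≤ b → a + b = 1 →
      F (a * x + b * y) ≤ ((a * (F x).toReal + b * (F y).toReal : ℝ) : EReal) :=
    fun x hx y hy a b ha hb hab => hF.epigraph_comb_le (EReal.coe_toReal hx (hbot x)).ge
      (EReal.coe_toReal hy (hbot y)).ge ha hb hab
  refine ⟨fun x hx y hy a b ha hb hab => ?_, fun x hx y hy a b ha hb hab => ?_⟩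
  · exact ne_top_of_le_ne_top (EReal.coe_ne_top _) (key x hx y hy a b ha hb hab)
  · exact (EReal.toReal_le_toReal (key x hx y hy a b ha hb hab) (hbot _)
      (EReal.coe_ne_top _)).trans_eq (EReal.toReal_coe _)

lemma rightDeriv_mem_subdiff (hF : Convex ℝ {p : ℝ × ℝ | F p.1 ≤ p.2}) (hbot : ∀ x, F x ≠ ⊥)
    {x : ℝ} (hx : x ∈ interior {x | F x ≠ ⊤}) :
    derivWithin (fun x => (F x).toReal) (Ioi x) x ∈ subdiff F x := by
  have hφ := convexOn_toReal_of_convex_epigraph hF hbot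
  intro y
  by_cases hy : F y = ⊤
  · simp [hy]
  rw [← EReal.coe_toReal (interior_subset hx) (hbot x), ← EReal.coe_toReal hy (hbot y),
    ← EReal.coe_add, EReal.coe_le_coe_iff]
  rcases lt_trichotomy x y with hxy | rfl | hyx
  · have := hφ.rightDeriv_le_slope_of_mem_interior hx hy hxy
    rw [slope_def_field, le_div_iff₀ (sub_pos.2 hxy)] at this
    linarith
  · simp
  · have := (hφ.slope_le_leftDeriv_of_mem_interior hy hx hyx).trans
      (hφ.leftDeriv_le_rightDeriv_of_mem_interior hx)
    rw [slope_def_field, div_le_iff₀ (sub_pos.2 hyx)] at this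
    linarith

end Subdifferential

section Regularizer

variable {h : ℝ → EReal} {lam : ℝ}

lemma gfun_neg (heven : ∀ x, h (-x) = h x) (x : ℝ) : gfun lam h (-x) = gfun lam h x := by
  simp [gfun, heven]

lemma conj_gfun (hlam : 0 ≤ lam) (h0 : h 0 = 0) (v : ℝ) :
    conj (gfun lam h) v = (conj h v - lam) ⊔ 0 := by
  have hsplit : ∀ x, x ≠ 0 →
      ((v * x : ℝ) : EReal) - h x = ((v * x : ℝ) : EReal) - gfun lam h x + lam := by
    intro x hx
    simp only [gfun, if_neg hx]
    cases h x using EReal.rec with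
    | bot => simp only [EReal.add_bot, EReal.coe_sub_bot, EReal.top_add_coe]
    | coe c => norm_cast; ring
    | top => simp only [EReal.coe_add_top, EReal.sub_top, EReal.bot_add]
  have hG0 : 0 ≤ conj (gfun lam h) v := conj_nonneg (by simp [gfun, h0]) v
  refine le_antisymm (iSup_le fun x => ?_) (sup_le ?_ hG0)
  · by_cases hx : x = 0
    · simp [hx, gfun, h0]
    · refine le_sup_of_le_left ?_
      rw [EReal.le_sub_iff_add_le (Or.inl (EReal.coe_ne_bot lam)) (Or.inl (EReal.coe_ne_top lam)),
        ← hsplit x hx]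
      exact le_conj h v x
  · rw [EReal.sub_le_iff_le_add (Or.inl (EReal.coe_ne_bot lam)) (Or.inl (EReal.coe_ne_top lam))]
    refine iSup_le fun x => ?_
    by_cases hx : x = 0
    · simpa [hx, h0] using add_nonneg hG0 (EReal.coe_nonneg.2 hlam)
    · rw [hsplit x hx]
      exact add_le_add (le_conj _ v x) le_rfl

lemma bddAbove_tauSet (hdom : ∃ x : ℝ, 0 < x ∧ h x ≠ ⊤) :
    BddAbove {v : ℝ | 0 ≤ v ∧ conj h v ≤ lam} := by
  obtain ⟨x, hx0, hxt⟩ := hdom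
  refine ⟨(lam + (h x).toReal) / x, fun w hw => ?_⟩
  rw [le_div_iff₀ hx0]
  exact conj_le_coe_iff.1 hw.2 x _ (EReal.le_coe_toReal hxt)

lemma tau_mem (hlam : 0 ≤ lam) (h0 : h 0 = 0) (hge : ∀ x, 0 ≤ h x)
    (hdom : ∃ x : ℝ, 0 < x ∧ h x ≠ ⊤) : tau lam h ∈ {v : ℝ | 0 ≤ v ∧ conj h v ≤ lam} :=
  IsClosed.csSup_mem (isClosed_Ici.inter ((lowerSemicontinuous_conj h).isClosed_preimage lam))
    ⟨0, le_rfl, by rw [conj_zero h0 hge]; exact_mod_cast hlam⟩ (bddAbove_tauSet hdom)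

lemma lam_lt_conj_of_tau_lt (hlam : 0 ≤ lam) (h0 : h 0 = 0) (hge : ∀ x, 0 ≤ h x)
    (hdom : ∃ x : ℝ, 0 < x ∧ h x ≠ ⊤) {w : ℝ} (hw : tau lam h < w) : (lam : EReal) < conj h w := by
  by_contra! hle
  exact hw.not_ge (le_csSup (bddAbove_tauSet hdom)
    ⟨(tau_mem hlam h0 hge hdom).1.trans hw.le, hle⟩)

lemma conj_gfun_eq_zero_of_abs_le_tau (hlam : 0 ≤ lam) (h0 : h 0 = 0) (hge : ∀ x, 0 ≤ h x)
    (hdom : ∃ x : ℝ, 0 < x ∧ h x ≠ ⊤) (heven : ∀ x, h (-x) = h x) {v : ℝ}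
    (hv : |v| ≤ tau lam h) : conj (gfun lam h) v = 0 := by
  have hτ := tau_mem hlam h0 hge hdom
  have hHv : conj h v ≤ lam := by
    rw [← apply_abs_of_neg_eq (conj_neg_eq heven)]
    exact (monotoneOn_conj heven (abs_nonneg v) hτ.1 hv).trans hτ.2
  rw [conj_gfun hlam h0]
  exact sup_eq_right.2 (EReal.sub_nonpos.2 hHv)

lemma EConvexOn.slope_zero_mono (hconv : EConvexOn h) (h0 : h 0 = 0) {x₀ u b c : ℝ}
    (hx₀ : 0 < x₀) (hu : x₀ ≤ u) (hb : (b : EReal) ≤ h x₀) (hc : h u ≤ c) : b * u ≤ x₀ * c := by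
  have hu0 : 0 < u := hx₀.trans_le hu
  have key := hconv u 0 (x₀ / u) (1 - x₀ / u) (by positivity)
    (sub_nonneg.2 ((div_le_one hu0).2 hu)) (by ring)
  rw [mul_zero, add_zero, div_mul_cancel₀ x₀ hu0.ne', h0, mul_zero, add_zero] at key
  have hbc : (b : EReal) ≤ ((x₀ / u * c : ℝ) : EReal) := by
    rw [EReal.coe_mul]
    exact hb.trans (key.trans (mul_le_mul_of_nonneg_left hc (by positivity)))
  rw [EReal.coe_le_coe_iff, div_mul_eq_mul_div, le_div_iff₀ hu0] at hbc
  linarith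

lemma conj_div_le (h0 : h 0 = 0) (hge : ∀ x, 0 ≤ h x) (hconv : EConvexOn h)
    (heven : ∀ x, h (-x) = h x) {x₀ b : ℝ} (hx₀ : 0 < x₀) (hb : 0 ≤ b)
    (hbx : (b : EReal) ≤ h x₀) : conj h (b / x₀) ≤ b := by
  rw [conj_le_coe_iff]
  intro x c hc
  have hc0 : 0 ≤ c := by exact_mod_cast (hge x).trans hc
  have hx : b / x₀ * x ≤ b / x₀ * |x| := mul_le_mul_of_nonneg_left (le_abs_self x) (by positivity)
  rcases le_total |x| x₀ with hle | hgt
  · have : b / x₀ * |x| ≤ b := by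
      rw [div_mul_eq_mul_div, div_le_iff₀ hx₀]; nlinarith
    linarith
  · have := hconv.slope_zero_mono h0 hx₀ hgt hbx (by rwa [apply_abs_of_neg_eq heven])
    have : b / x₀ * |x| ≤ c := by rw [div_mul_eq_mul_div, div_le_iff₀ hx₀]; linarith
    linarith

lemma tau_pos (hlam : 0 < lam) (h0 : h 0 = 0) (hge : ∀ x, 0 ≤ h x) (hconv : EConvexOn h)
    (hdom : ∃ x : ℝ, 0 < x ∧ h x ≠ ⊤) (heven : ∀ x, h (-x) = h x) (hnz : ∃ x, h x ≠ 0) :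
    0 < tau lam h := by
  obtain ⟨x, hx⟩ := hnz
  have hx0 : 0 < |x| := abs_pos.2 (by rintro rfl; exact hx h0)
  have hpos : 0 < h |x| := by
    rw [apply_abs_of_neg_eq heven]; exact lt_of_le_of_ne (hge x) (Ne.symm hx)
  obtain ⟨b, hb0, hbx⟩ := EReal.lt_iff_exists_real_btwn.1 hpos
  have hb : 0 < min b lam := lt_min (by exact_mod_cast hb0) hlam
  have hconj : conj h (min b lam / |x|) ≤ lam :=
    (conj_div_le h0 hge hconv heven hx0 hb.le
      ((EReal.coe_le_coe_iff.2 (min_le_left b lam)).trans hbx.le)).trans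
      (EReal.coe_le_coe_iff.2 (min_le_right b lam))
  exact (div_pos hb hx0).trans_le (le_csSup (bddAbove_tauSet hdom) ⟨by positivity, hconj⟩)

lemma tau_mem_interior (h0 : h 0 = 0) (hge : ∀ x, 0 ≤ h x) (hτ : 0 < tau lam h) {y : ℝ}
    (hy : tau lam h < y) (hyt : conj h y ≠ ⊤) : tau lam h ∈ interior {v | conj h v ≠ ⊤} := by
  have hdom := (convexOn_toReal_of_convex_epigraph (convex_epigraph_conj h) (conj_ne_bot h0)).1
  have hIcc : Icc 0 y ⊆ {v | conj h v ≠ ⊤} :=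
    hdom.ordConnected.out (by simp [conj_zero h0 hge]) hyt
  exact interior_mono (Ioo_subset_Icc_self.trans hIcc) (by rw [interior_Ioo]; exact ⟨hτ, hy⟩)

lemma conj_tau_eq (hlam : 0 ≤ lam) (h0 : h 0 = 0) (hge : ∀ x, 0 ≤ h x)
    (hdom : ∃ x : ℝ, 0 < x ∧ h x ≠ ⊤) (hτ : tau lam h ∈ interior {v | conj h v ≠ ⊤}) :
    conj h (tau lam h) = lam := by
  have hφ := convexOn_toReal_of_convex_epigraph (convex_epigraph_conj h) (conj_ne_bot h0)
  have hcoe : ∀ v ∈ {v | conj h v ≠ ⊤}, ((conj h v).toReal : EReal) = conj h v :=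
    fun v hv => EReal.coe_toReal hv (conj_ne_bot h0 v)
  have hnhds := isOpen_interior.mem_nhds hτ
  have hlim : Tendsto (fun v => (conj h v).toReal) (𝓝[>] tau lam h)
      (𝓝 (conj h (tau lam h)).toReal) :=
    (hφ.continuousOn_interior.continuousAt hnhds).tendsto.mono_left nhdsWithin_le_nhds
  have hev : ∀ᶠ w in 𝓝[>] tau lam h, lam ≤ (conj h w).toReal := by
    filter_upwards [self_mem_nhdsWithin, nhdsWithin_le_nhds hnhds] with w hw hwint
    have := lam_lt_conj_of_tau_lt hlam h0 hge hdom hw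
    rw [← hcoe w (interior_subset hwint)] at this
    exact_mod_cast this.le
  refine le_antisymm (tau_mem hlam h0 hge hdom).2 ?_
  rw [← hcoe _ (interior_subset hτ)]
  exact EReal.coe_le_coe_iff.2 (ge_of_tendsto hlim hev)

end Regularizer

section SubdiffConjGfun

variable {h : ℝ → EReal} {lam : ℝ}

lemma subdiff_conj_gfun_of_abs_lt_tau (hlam : 0 ≤ lam) (h0 : h 0 = 0) (hge : ∀ x, 0 ≤ h x)
    (hdom : ∃ x : ℝ, 0 < x ∧ h x ≠ ⊤) (heven : ∀ x, h (-x) = h x) {v : ℝ}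
    (hv : |v| < tau lam h) : subdiff (conj (gfun lam h)) v = {0} := by
  have hτ : 0 ≤ tau lam h := (tau_mem hlam h0 hge hdom).1
  have hzero := fun {w : ℝ} (hw : |w| ≤ tau lam h) =>
    conj_gfun_eq_zero_of_abs_le_tau hlam h0 hge hdom heven hw
  exact subdiff_eq_singleton_zero (conj_nonneg (by simp [gfun, h0])) (a := -tau lam h)
    (b := tau lam h) (by linarith [neg_abs_le v]) (by linarith [le_abs_self v])
    (hzero (by rw [abs_neg, abs_of_nonneg hτ])) (hzero hv.le) (hzero (abs_of_nonneg hτ).le)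

lemma subdiff_conj_gfun_of_tau_lt_abs (hlam : 0 ≤ lam) (h0 : h 0 = 0) (hge : ∀ x, 0 ≤ h x)
    (hdom : ∃ x : ℝ, 0 < x ∧ h x ≠ ⊤) (heven : ∀ x, h (-x) = h x) {v : ℝ}
    (hv : tau lam h < |v|) (hGv : conj (gfun lam h) v ≠ ⊤) :
    subdiff (conj (gfun lam h)) v = subdiff (conj h) v := by
  have hlt : (lam : EReal) < conj h v := by
    rw [← apply_abs_of_neg_eq (conj_neg_eq heven)]
    exact lam_lt_conj_of_tau_lt hlam h0 hge hdom hv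
  have htop : conj h v ≠ ⊤ := fun htop => hGv (by simp [conj_gfun hlam h0, htop])
  rw [show conj (gfun lam h) = fun y => (conj h y - lam) ⊔ 0 from funext (conj_gfun hlam h0)]
  exact subdiff_max_sub_const (convex_epigraph_conj h) (lowerSemicontinuous_conj h) htop hlt

lemma mem_subdiff_conj_gfun_tau_iff (hlam : 0 ≤ lam) (h0 : h 0 = 0) (hge : ∀ x, 0 ≤ h x)
    (hdom : ∃ x : ℝ, 0 < x ∧ h x ≠ ⊤) (heven : ∀ x, h (-x) = h x) (hτ : 0 < tau lam h)
    {d : ℝ} : d ∈ subdiff (conj (gfun lam h)) (tau lam h) ↔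
      0 ≤ d ∧ ∀ y, tau lam h < y → ((lam + d * (y - tau lam h) : ℝ) : EReal) ≤ conj h y := by
  have hzero := fun {w : ℝ} (hw : |w| ≤ tau lam h) =>
    conj_gfun_eq_zero_of_abs_le_tau hlam h0 hge hdom heven hw
  have hGτ : conj (gfun lam h) (tau lam h) = 0 := hzero (abs_of_pos hτ).le
  refine ⟨fun hd => ⟨?_, fun y hy => ?_⟩, fun ⟨hd0, hd⟩ y => ?_⟩
  · have := hd 0
    rw [hGτ, hzero (by simpa using hτ.le), zero_add, EReal.coe_nonpos] at this
    nlinarith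
  · have := hd y
    rw [hGτ, zero_add, conj_gfun hlam h0,
      sup_eq_left.2 (EReal.sub_pos.2 (lam_lt_conj_of_tau_lt hlam h0 hge hdom hy)).le] at this
    rw [EReal.coe_add, add_comm]
    exact EReal.add_le_of_le_sub this
  · rw [hGτ, zero_add]
    rcases le_or_gt y (tau lam h) with hyτ | hτy
    · exact (EReal.coe_nonpos.2 (mul_nonpos_of_nonneg_of_nonpos hd0 (sub_nonpos.2 hyτ))).trans
        (conj_nonneg (by simp [gfun, h0]) y)
    · rw [conj_gfun hlam h0]
      refine le_sup_of_le_left ?_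
      rw [EReal.le_sub_iff_add_le (Or.inl (EReal.coe_ne_bot lam)) (Or.inl (EReal.coe_ne_top lam)),
        add_comm, ← EReal.coe_add]
      exact hd y hτy

lemma forall_coe_le_conj_iff_le_mu (hlam : 0 ≤ lam) (h0 : h 0 = 0) (hge : ∀ x, 0 ≤ h x)
    (hdom : ∃ x : ℝ, 0 < x ∧ h x ≠ ⊤) (hτ : 0 < tau lam h) {d : ℝ} (hd0 : 0 ≤ d) :
    (∀ y, tau lam h < y → ((lam + d * (y - tau lam h) : ℝ) : EReal) ≤ conj h y) ↔
      (d : EReal) ≤ mu lam h := by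
  constructor
  · intro hd
    unfold mu
    split_ifs with hne
    · obtain ⟨e, he⟩ := hne
      have hmax : max d e ∈ subdiff (conj h) (tau lam h) := max_mem_subdiff he fun y hy =>
        (add_le_add (tau_mem hlam h0 hge hdom).2 le_rfl).trans (by rw [← EReal.coe_add]; exact hd y hy)
      exact (EReal.coe_le_coe_iff.2 (le_max_left d e)).trans
        (le_sSup ⟨_, ⟨hd0.trans (le_max_left d e), hmax⟩, rfl⟩)
    · exact le_top
  · intro hdμ y hy
    by_cases hyt : conj h y = ⊤
    · simp [hyt]
    have hint := tau_mem_interior h0 hge hτ hy hyt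
    have hne : (subdiff (conj h) (tau lam h)).Nonempty :=
      ⟨_, rightDeriv_mem_subdiff (convex_epigraph_conj h) (conj_ne_bot h0) hint⟩
    have hHτ := conj_tau_eq hlam h0 hge hdom hint
    rw [mu, if_pos hne] at hdμ
    obtain ⟨q, hq⟩ : ∃ q : ℝ, conj h y = q := ⟨_, (EReal.coe_toReal hyt (conj_ne_bot h0 y)).symm⟩
    have hyτ : 0 < y - tau lam h := sub_pos.2 hy
    have hbound : (d : EReal) ≤ ((q - lam) / (y - tau lam h) : ℝ) := by
      refine hdμ.trans (sSup_le ?_)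
      rintro _ ⟨x, ⟨-, hx⟩, rfl⟩
      have := hx y
      rw [hHτ, hq, ← EReal.coe_add, EReal.coe_le_coe_iff] at this
      rw [EReal.coe_le_coe_iff, le_div_iff₀ hyτ]
      linarith
    rw [EReal.coe_le_coe_iff, le_div_iff₀ hyτ] at hbound
    rw [hq, EReal.coe_le_coe_iff]
    linarith

lemma subdiff_conj_gfun_tau (hlam : 0 ≤ lam) (h0 : h 0 = 0) (hge : ∀ x, 0 ≤ h x)
    (hdom : ∃ x : ℝ, 0 < x ∧ h x ≠ ⊤) (heven : ∀ x, h (-x) = h x) (hτ : 0 < tau lam h) :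
    subdiff (conj (gfun lam h)) (tau lam h) = {d : ℝ | 0 ≤ d ∧ (d : EReal) ≤ mu lam h} := by
  ext d
  rw [mem_subdiff_conj_gfun_tau_iff hlam h0 hge hdom heven hτ]
  exact and_congr_right (forall_coe_le_conj_iff_le_mu hlam h0 hge hdom hτ)

end SubdiffConjGfun

theorem subdiff_conj_gfun_general (lam : ℝ) (h : ℝ → EReal) (hlam : 0 < lam)
    (h0 : h 0 = 0) (hge : ∀ x : ℝ, 0 ≤ h x)
    (hconv : EConvexOn h)
    (hdom : ∃ x : ℝ, 0 < x ∧ h x ≠ ⊤) (heven : ∀ x : ℝ, h (-x) = h x)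
    (hnz : ∃ x : ℝ, h x ≠ 0) :
    ∀ v : ℝ, conj (gfun lam h) v ≠ ⊤ →
      ((|v| < tau lam h → subdiff (conj (gfun lam h)) v = {0}) ∧
       (|v| = tau lam h →
          subdiff (conj (gfun lam h)) v =
            {d : ℝ | 0 ≤ Real.sign v * d ∧
              ((Real.sign v * d : ℝ) : EReal) ≤ mu lam h}) ∧
       (tau lam h < |v| →
          subdiff (conj (gfun lam h)) v = subdiff (conj h) v)) := by
  intro v hGv
  have hτ := tau_pos hlam h0 hge hconv hdom heven hnz
  refine ⟨subdiff_conj_gfun_of_abs_lt_tau hlam.le h0 hge hdom heven, fun hv => ?_,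
    fun hv => subdiff_conj_gfun_of_tau_lt_abs hlam.le h0 hge hdom heven hv hGv⟩
  rcases (abs_eq hτ.le).1 hv with rfl | rfl
  · rw [subdiff_conj_gfun_tau hlam.le h0 hge hdom heven hτ]
    simp [Real.sign_of_pos hτ]
  · rw [subdiff_neg (conj_neg_eq (gfun_neg heven)), subdiff_conj_gfun_tau hlam.le h0 hge hdom heven hτ]
    ext d
    simp [Real.sign_of_neg (neg_neg_of_pos hτ)]

theorem subdiff_conj_gfun (lam : ℝ) (h : ℝ → EReal) (hlam : 0 < lam)
    (h0 : h 0 = 0) (hge : ∀ x : ℝ, 0 ≤ h x)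
    (hlsc : LowerSemicontinuous h) (hconv : EConvexOn h)
    (hdom : ∃ x : ℝ, 0 < x ∧ h x ≠ ⊤) (heven : ∀ x : ℝ, h (-x) = h x)
    (hnz : ∃ x : ℝ, h x ≠ 0) :
    ∀ v : ℝ, conj (gfun lam h) v ≠ ⊤ →
      ((|v| < tau lam h → subdiff (conj (gfun lam h)) v = {0}) ∧
       (|v| = tau lam h →
          subdiff (conj (gfun lam h)) v =
            {d : ℝ | 0 ≤ Real.sign v * d ∧
              ((Real.sign v * d : ℝ) : EReal) ≤ mu lam h}) ∧
       (tau lam h < |v| →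
          subdiff (conj (gfun lam h)) v = subdiff (conj h) v)) :=
  subdiff_conj_gfun_general lam h hlam h0 hge hconv hdom heven hnz
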